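/- Let s ≥ 0, let μ be a Borel measure on ℝⁿ and let σ be a Borel probability measure on ℝⁿ. Then ℰ^+_{w,s}(μ ∗ σ) = ℰ^+_{w,s}(μ). -/

import Mathlib

open MeasureTheory Set ENNReal NNReal

noncomputable section

/-- Points of `ℝⁿ` with the Euclidean norm. -/
abbrev Pt (n : ℕ) := EuclideanSpace ℝ (Fin n)

/-- The action of an `n × n` real matrix on Euclidean space. -/
def mapp {n : ℕ} (A : Matrix (Fin n) (Fin n) ℝ) (x : Pt n) : Pt n :=
  Matrix.toEuclideanLin A x

/-- A real matrix is expanding if all of its (complex) eigenvalues have modulus `> 1`. -/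
def IsExpandingMatrix {n : ℕ} (A : Matrix (Fin n) (Fin n) ℝ) : Prop :=
  ∀ μ ∈ spectrum ℂ (A.map (fun a => (a : ℂ))), 1 < ‖μ‖

/-- The diameter of a set with respect to the pseudo norm `w`. -/
def pdiam {n : ℕ} (w : Pt n → ℝ) (E : Set (Pt n)) : ℝ≥0∞ :=
  ⨆ (x ∈ E) (y ∈ E), ENNReal.ofReal (w (x - y))

/-- The `δ`-approximation of the `s`-dimensional pseudo Hausdorff measure. -/
def preHw {n : ℕ} (w : Pt n → ℝ) (s δ : ℝ) (E : Set (Pt n)) : ℝ≥0∞ :=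
  ⨅ (U : ℕ → Set (Pt n)) (_ : E ⊆ ⋃ i, U i)
    (_ : ∀ i, pdiam w (U i) ≤ ENNReal.ofReal δ), ∑' i, pdiam w (U i) ^ s

/-- The `s`-dimensional pseudo Hausdorff measure w.r.t. the pseudo norm `w`. -/
def Hw {n : ℕ} (w : Pt n → ℝ) (s : ℝ) (E : Set (Pt n)) : ℝ≥0∞ :=
  ⨆ (δ : ℝ) (_ : 0 < δ), preHw w s δ E

/-- Carathéodory measurability with respect to the outer measure `Hw w s`. -/
def HwMeasurable {n : ℕ} (w : Pt n → ℝ) (s : ℝ) (E : Set (Pt n)) : Prop :=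
  ∀ T : Set (Pt n), Hw w s T = Hw w s (T ∩ E) + Hw w s (T \ E)

/-- A pseudo norm associated with the expanding matrix `A`. -/
structure IsPseudoNorm {n : ℕ} (A : Matrix (Fin n) (Fin n) ℝ) (w : Pt n → ℝ) : Prop where
  continuous : Continuous w
  nonneg : ∀ x, 0 ≤ w x
  neg : ∀ x, w (-x) = w x
  eq_zero_iff : ∀ x, w x = 0 ↔ x = 0
  scaling : ∀ x, w (mapp A x) = |A.det| ^ ((1 : ℝ) / n) * w x
  quasi_triangle : ∃ β > (0 : ℝ), ∀ x y, w (x + y) ≤ β * max (w x) (w y)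
  comparable : ∃ C > (0 : ℝ), ∃ α₁ > (0 : ℝ), ∃ α₂ > (0 : ℝ),
    (∀ x : Pt n, 1 < ‖x‖ → C⁻¹ * ‖x‖ ^ α₁ ≤ w x ∧ w x ≤ C * ‖x‖ ^ α₂) ∧
    (∀ x : Pt n, ‖x‖ ≤ 1 → C⁻¹ * ‖x‖ ^ α₂ ≤ w x ∧ w x ≤ C * ‖x‖ ^ α₁)

/-- The map `f_d(x) = A⁻¹(x + d)` of the self-affine IFS. -/
def fIFS {n : ℕ} (A : Matrix (Fin n) (Fin n) ℝ) (d : Pt n) (x : Pt n) : Pt n :=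
  mapp A⁻¹ (x + d)

/-- The open set condition for the IFS `{f_d}_{d ∈ D}`. -/
def OSC {n : ℕ} (A : Matrix (Fin n) (Fin n) ℝ) (D : Finset (Pt n)) : Prop :=
  ∃ V : Set (Pt n), V.Nonempty ∧ IsOpen V ∧ Bornology.IsBounded V ∧
    (⋃ d ∈ D, fIFS A d '' V) ⊆ V ∧
    ∀ d ∈ D, ∀ d' ∈ D, d ≠ d' → fIFS A d '' V ∩ fIFS A d' '' V = ∅

/-- `K` is the self-affine set (attractor) for the pair `(A, D)`:
a nonempty compact set with `A K = ⋃_{d ∈ D} (K + d)`. -/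
def IsSelfAffineSet {n : ℕ} (A : Matrix (Fin n) (Fin n) ℝ) (D : Finset (Pt n))
    (K : Set (Pt n)) : Prop :=
  K.Nonempty ∧ IsCompact K ∧ mapp A '' K = ⋃ d ∈ D, (fun x => x + d) '' K

/-- The set `𝒟_M` of `M`-fold expansions `Σ_{j<M} A^j d_j`. -/
def DsetM {n : ℕ} (A : Matrix (Fin n) (Fin n) ℝ) (D : Finset (Pt n)) (M : ℕ) :
    Set (Pt n) :=
  {x | ∃ d : Fin M → Pt n, (∀ j, d j ∈ D) ∧ x = ∑ j : Fin M, mapp (A ^ (j : ℕ)) (d j)}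

/-- The set `𝒟_∞ = ⋃_{M ≥ 1} 𝒟_M`. -/
def DsetInf {n : ℕ} (A : Matrix (Fin n) (Fin n) ℝ) (D : Finset (Pt n)) : Set (Pt n) :=
  ⋃ (M : ℕ) (_ : 1 ≤ M), DsetM A D M

/-- A set is uniformly discrete if distinct points are uniformly separated. -/
def UniformlyDiscrete {n : ℕ} (S : Set (Pt n)) : Prop :=
  ∃ δ > (0 : ℝ), ∀ x ∈ S, ∀ y ∈ S, x ≠ y → δ < ‖x - y‖

/-- `σ` is the invariant (self-affine) probability measure of the IFS `{f_d}_{d ∈ D}`. -/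
def IsInvariantMeasure {n : ℕ} (A : Matrix (Fin n) (Fin n) ℝ) (D : Finset (Pt n))
    (σ : Measure (Pt n)) : Prop :=
  IsProbabilityMeasure σ ∧
  ∀ f : Pt n → ℝ, Continuous f → HasCompactSupport f →
    ∫ x, f x ∂σ = ((D.card : ℝ))⁻¹ * ∑ d ∈ D, ∫ x, f (fIFS A d x) ∂σ

/-- The measure `μ_M = Σ_{d_0,…,d_{M−1} ∈ 𝒟} δ_{d_0 + A d_1 + ⋯ + A^{M−1} d_{M−1}}`. -/
def muM {n : ℕ} (A : Matrix (Fin n) (Fin n) ℝ) (D : Finset (Pt n)) (M : ℕ) :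
    Measure (Pt n) :=
  ∑ d ∈ (Finset.univ : Finset (Fin M → {x : Pt n // x ∈ D})),
    Measure.dirac (∑ j : Fin M, mapp (A ^ (j : ℕ)) ((d j : Pt n)))

/-- Convolution of two Borel measures on `ℝⁿ`. -/
def mconv {n : ℕ} (μ ν : Measure (Pt n)) : Measure (Pt n) :=
  Measure.map (fun p : Pt n × Pt n => p.1 + p.2) (μ.prod ν)

/-- The upper `s`-density `ℰ⁺_{w,s}(ν)` of a Borel measure `ν` w.r.t. the pseudo norm `w`. -/
def upperDensity {n : ℕ} (w : Pt n → ℝ) (s : ℝ) (ν : Measure (Pt n)) : ℝ≥0∞ :=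
  ⨅ (r : ℝ) (_ : 0 < r),
    ⨆ (U : Set (Pt n)) (_ : IsCompact U) (_ : Convex ℝ U)
      (_ : ENNReal.ofReal r ≤ pdiam w U), ν U / pdiam w U ^ s

/-- The upper convex `s`-density `D^s_{w,c}(E, x)` of `E` at `x` w.r.t. `w`. -/
def upperConvexDensity {n : ℕ} (w : Pt n → ℝ) (s : ℝ) (E : Set (Pt n)) (x : Pt n) :
    ℝ≥0∞ :=
  ⨅ (r : ℝ) (_ : 0 < r),
    ⨆ (U : Set (Pt n)) (_ : Convex ℝ U) (_ : x ∈ U) (_ : 0 < pdiam w U)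
      (_ : pdiam w U ≤ ENNReal.ofReal r), Hw w s (E ∩ U) / pdiam w U ^ s

/-- The pseudo Hausdorff dimension `dim_H^w E = inf {s ≥ 0 : ℋ^s_w(E) = 0}`. -/
def dimHw {n : ℕ} (w : Pt n → ℝ) (E : Set (Pt n)) : ℝ≥0∞ :=
  ⨅ (t : ℝ≥0) (_ : Hw w (t : ℝ) E = 0), (t : ℝ≥0∞)

/-- `𝒱` is a Vitali class for `E` w.r.t. `w`. -/
def VitaliClass {n : ℕ} (w : Pt n → ℝ) (𝒱 : Set (Set (Pt n))) (E : Set (Pt n)) : Prop :=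
  ∀ x ∈ E, ∀ δ : ℝ, 0 < δ →
    ∃ U ∈ 𝒱, x ∈ U ∧ 0 < pdiam w U ∧ pdiam w U ≤ ENNReal.ofReal δ

/-- The composite map `f_𝐢 = f_{i₁} ∘ ⋯ ∘ f_{i_m}` associated with a word of digits. -/
def fWord {n : ℕ} (A : Matrix (Fin n) (Fin n) ℝ) (i : List (Pt n)) (x : Pt n) : Pt n :=
  i.foldr (fun d y => fIFS A d y) x

/-!
Convolution with a probability measure averages translates, `(μ ∗ σ) U = ∫ μ (U - y) dσ(y)`,
and translation does not change `w`-diameters; this gives `ℰ⁺(μ ∗ σ) ≤ ℰ⁺(μ)`.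

Conversely, if a ball `K` carries `σ`-mass at least `1 - ε`, then `(μ ∗ σ) (U + K) ≥ (1 - ε) μ U`,
and `diam_w (U + K) ≤ (1 + ε) diam_w U` once `diam_w U` is large. The latter holds because
`w (u + v) ≤ (1 + ε) w u` for bounded `v` and large `u`: since `w (A x) = λ w x` with
`λ = |det A| ^ (1 / n) > 1`, a power of `A⁻¹` moves `u` into the compact shell `1 ≤ w ≤ λ`
and makes `v` small, and there uniform continuity of `w` applies. Letting `ε → 0` gives
`ℰ⁺(μ) ≤ ℰ⁺(μ ∗ σ)`.
-/

open Filter Topology Metric Pointwise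

theorem LinearMap.exists_one_lt_mul_norm_le {E : Type*} [NormedAddCommGroup E]
    [NormedSpace ℝ E] [FiniteDimensional ℝ E] (f : E →ₗ[ℝ] E)
    (hf : ∀ x ≠ 0, ‖x‖ < ‖f x‖) : ∃ m, 1 < m ∧ ∀ x, m * ‖x‖ ≤ ‖f x‖ := by
  rcases subsingleton_or_nontrivial E with hE | hE
  · exact ⟨2, one_lt_two, fun x => by simp [Subsingleton.elim x 0]⟩
  obtain ⟨x₀, hx₀⟩ := exists_norm_eq E zero_le_one
  obtain ⟨x₁, hx₁, hmin⟩ := (isCompact_sphere (0 : E) 1).exists_isMinOn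
    ⟨x₀, by simpa using hx₀⟩ f.continuous_of_finiteDimensional.norm.continuousOn
  rw [mem_sphere_zero_iff_norm] at hx₁
  refine ⟨‖f x₁‖, hx₁ ▸ hf x₁ (norm_ne_zero_iff.mp (by simp [hx₁])), fun x => ?_⟩
  rcases eq_or_ne x 0 with rfl | hx
  · simp
  have hxpos : 0 < ‖x‖ := norm_pos_iff.mpr hx
  have hmin_x : ‖f x₁‖ ≤ ‖x‖⁻¹ * ‖f x‖ := by
    simpa [norm_smul, hxpos.ne'] using hmin (a := ‖x‖⁻¹ • x) (by simp [norm_smul, hxpos.ne'])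
  calc ‖f x₁‖ * ‖x‖ ≤ ‖x‖⁻¹ * ‖f x‖ * ‖x‖ := by gcongr
    _ = ‖f x‖ := by field_simp

theorem exists_lt_measure_closedBall {X : Type*} [PseudoMetricSpace X] [MeasurableSpace X]
    (μ : Measure X) (x : X) {a : ℝ≥0∞} (ha : a < μ univ) : ∃ R : ℝ, a < μ (closedBall x R) := by
  have hmono : Monotone fun k : ℕ => closedBall x k := fun i j hij =>
    closedBall_subset_closedBall (by exact_mod_cast hij)
  have h := tendsto_measure_iUnion_atTop (μ := μ) hmono
  rw [iUnion_closedBall_nat] at h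
  obtain ⟨k, hk⟩ := (h.eventually (eventually_gt_nhds ha)).exists
  exact ⟨k, hk⟩

theorem exists_le_ofReal_one_sub_div_one_add_rpow {a : ℝ≥0∞} (ha : a < 1) (s : ℝ) :
    ∃ ε, 0 < ε ∧ ε < 1 ∧ a ≤ ENNReal.ofReal ((1 - ε) / (1 + ε) ^ s) := by
  have hcont : ContinuousAt (fun ε : ℝ => (1 - ε) / (1 + ε) ^ s) 0 := by
    fun_prop (disch := norm_num)
  have hlim : Tendsto (fun ε : ℝ => (1 - ε) / (1 + ε) ^ s) (𝓝[>] 0) (𝓝 1) := by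
    simpa using hcont.tendsto.mono_left nhdsWithin_le_nhds
  have ha' : a.toReal < 1 := ENNReal.toReal_lt_of_lt_ofReal (by simpa using ha)
  obtain ⟨ε, hε, hε01⟩ :=
    ((hlim.eventually (lt_mem_nhds ha')).and (Ioo_mem_nhdsGT one_pos)).exists
  refine ⟨ε, hε01.1, hε01.2, ?_⟩
  rw [← ENNReal.ofReal_toReal ha.ne_top]
  exact ENNReal.ofReal_le_ofReal hε.le

namespace MeasureTheory.Measure

variable {M : Type*} [AddMonoid M] [MeasurableSpace M] [MeasurableAdd₂ M] {μ ν : Measure M}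

theorem conv_apply_le_of_forall_preimage_add_le [SFinite μ] [IsProbabilityMeasure ν]
    {U : Set M} (hU : MeasurableSet U) {c : ℝ≥0∞} (h : ∀ y, μ ((· + y) ⁻¹' U) ≤ c) :
    (μ ∗ ν) U ≤ c := by
  rw [conv, map_apply measurable_add hU, prod_apply_symm (measurable_add hU)]
  calc ∫⁻ y, μ ((· + y) ⁻¹' U) ∂ν ≤ ∫⁻ _, c ∂ν := lintegral_mono h
    _ = c := by simp

theorem mul_le_conv_apply_add [SFinite ν] {U K : Set M} (hUK : MeasurableSet (U + K)) :
    ν K * μ U ≤ (μ ∗ ν) (U + K) := by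
  have hmeas := measurable_add hUK
  rw [conv, map_apply measurable_add hUK, prod_apply hmeas, ← setLIntegral_const]
  refine (setLIntegral_mono (measurable_measure_prodMk_left hmeas) fun x hx => ?_).trans
    (setLIntegral_le_lintegral _ _)
  exact measure_mono fun y hy => add_mem_add hx hy

end MeasureTheory.Measure

section PseudoDiameter

variable {n : ℕ} (w : Pt n → ℝ)

theorem ofReal_le_pdiam {U : Set (Pt n)} {x y : Pt n} (hx : x ∈ U) (hy : y ∈ U) :
    ENNReal.ofReal (w (x - y)) ≤ pdiam w U :=
  le_iSup₂_of_le x hx (le_iSup₂_of_le y hy le_rfl)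

theorem pdiam_le {U : Set (Pt n)} {L : ℝ≥0∞}
    (h : ∀ x ∈ U, ∀ y ∈ U, ENNReal.ofReal (w (x - y)) ≤ L) : pdiam w U ≤ L :=
  iSup₂_le fun x hx => iSup₂_le fun y hy => h x hx y hy

theorem pdiam_mono {U V : Set (Pt n)} (h : U ⊆ V) : pdiam w U ≤ pdiam w V :=
  pdiam_le w fun _ hx _ hy => ofReal_le_pdiam w (h hx) (h hy)

theorem pdiam_lt_top {w : Pt n → ℝ} (hw : Continuous w) {U : Set (Pt n)} (hU : IsCompact U) :
    pdiam w U < ⊤ := by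
  obtain ⟨b, hb⟩ := (hU.prod hU).bddAbove_image
    (hw.comp (continuous_fst.sub continuous_snd)).continuousOn
  refine (pdiam_le (L := ENNReal.ofReal b) w fun x hx y hy => ?_).trans_lt ENNReal.ofReal_lt_top
  exact ENNReal.ofReal_le_ofReal (hb ⟨(x, y), ⟨hx, hy⟩, rfl⟩)

theorem pdiam_preimage_add_right (U : Set (Pt n)) (y : Pt n) :
    pdiam w ((· + y) ⁻¹' U) = pdiam w U := by
  refine le_antisymm (pdiam_le w fun a ha b hb => ?_) (pdiam_le w fun a ha b hb => ?_)
  · simpa using ofReal_le_pdiam w (U := U) (x := a + y) (y := b + y) ha hb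
  · simpa using ofReal_le_pdiam w (U := (· + y) ⁻¹' U) (x := a - y) (y := b - y)
      (by simpa using ha) (by simpa using hb)

end PseudoDiameter

namespace IsPseudoNorm

variable {n : ℕ} {A : Matrix (Fin n) (Fin n) ℝ} {w : Pt n → ℝ}

theorem exists_norm_le_of_le (hw : IsPseudoNorm A w) (M : ℝ) :
    ∃ N, ∀ x, w x ≤ M → ‖x‖ ≤ N := by
  obtain ⟨C, hC, α₁, hα₁, _, _, hbig, _⟩ := hw.comparable
  refine ⟨max 1 ((C * M) ^ α₁⁻¹), fun x hx => ?_⟩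
  by_contra! h
  have hx1 : 1 < ‖x‖ := (le_max_left _ _).trans_lt h
  have hpow : ‖x‖ ^ α₁ ≤ C * M := by
    have := (hbig x hx1).1
    rw [inv_mul_le_iff₀ hC] at this
    nlinarith
  have hCM : 0 ≤ C * M := (Real.rpow_nonneg (norm_nonneg x) _).trans hpow
  have hle : ‖x‖ ≤ (C * M) ^ α₁⁻¹ :=
    (Real.le_rpow_inv_iff_of_pos (norm_nonneg x) hCM hα₁).mpr hpow
  exact (le_max_right _ _).not_gt (h.trans_le hle)

theorem exists_pos_norm_lt_of_le (hw : IsPseudoNorm A w) {δ : ℝ} (hδ : 0 < δ) :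
    ∃ τ > 0, ∀ x, w x ≤ τ → ‖x‖ < δ := by
  obtain ⟨C, hC, α₁, hα₁, α₂, hα₂, hbig, hsmall⟩ := hw.comparable
  set δ₁ := min δ 1
  have hδ₁ : 0 < δ₁ := lt_min hδ one_pos
  have hδ₁pow : δ₁ ^ α₂ ≤ 1 := Real.rpow_le_one hδ₁.le (min_le_right _ _) hα₂.le
  refine ⟨C⁻¹ * δ₁ ^ α₂ / 2, by positivity, fun x hx => ?_⟩
  by_contra! h
  have hbound : C⁻¹ * δ₁ ^ α₂ ≤ w x := by
    rcases le_or_gt ‖x‖ 1 with h1 | h1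
    · refine le_trans ?_ (hsmall x h1).1
      gcongr
      exact (min_le_left _ _).trans h
    · refine le_trans ?_ (hbig x h1).1
      gcongr
      exact hδ₁pow.trans (Real.one_le_rpow h1.le hα₁.le)
  have : 0 < C⁻¹ * δ₁ ^ α₂ := by positivity
  linarith

theorem exists_le_pdiam_closedBall (hw : IsPseudoNorm A w) (hn : 0 < n) (t : ℝ) :
    ∃ R, ENNReal.ofReal t ≤ pdiam w (closedBall 0 R) := by
  have : Nonempty (Fin n) := Fin.pos_iff_nonempty.mp hn
  obtain ⟨N, hN⟩ := hw.exists_norm_le_of_le t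
  obtain ⟨x, hx⟩ := exists_norm_eq (Pt n) (by positivity : (0 : ℝ) ≤ max N 0 + 1)
  have htx : t ≤ w x := by
    by_contra! h
    linarith [hN x h.le, le_max_left N 0]
  refine ⟨‖x‖, (ENNReal.ofReal_le_ofReal (by simpa using htx)).trans
    (ofReal_le_pdiam w (x := x) (y := 0) ?_ ?_)⟩ <;> simp

theorem scaling_pow (hw : IsPseudoNorm A w) (k : ℕ) (x : Pt n) :
    w ((Matrix.toEuclideanLin A ^ k) x) = (|A.det| ^ ((1 : ℝ) / n)) ^ k * w x := by
  induction k with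
  | zero => simp
  | succ k ih =>
    rw [pow_succ', Module.End.mul_apply, ← mapp, hw.scaling, ih, pow_succ']
    ring

theorem one_lt_abs_det_rpow (hw : IsPseudoNorm A w) (hn : 0 < n)
    (hA : ∀ x ≠ 0, ‖x‖ < ‖mapp A x‖) : 1 < |A.det| ^ ((1 : ℝ) / n) := by
  set L := Matrix.toEuclideanLin A
  obtain ⟨m, hm, hmL⟩ := L.exists_one_lt_mul_norm_le hA
  have : Nonempty (Fin n) := Fin.pos_iff_nonempty.mp hn
  obtain ⟨x₀, hx₀⟩ := exists_norm_eq (Pt n) zero_le_one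
  have hgrowth : ∀ k : ℕ, m ^ k ≤ ‖(L ^ k) x₀‖ := by
    intro k
    induction k with
    | zero => simp [hx₀]
    | succ k ih =>
      rw [pow_succ' m, pow_succ' L, Module.End.mul_apply]
      exact (mul_le_mul_of_nonneg_left ih (by linarith)).trans (hmL _)
  obtain ⟨N, hN⟩ := hw.exists_norm_le_of_le (w x₀)
  by_contra! hscale
  obtain ⟨k, hk⟩ := pow_unbounded_of_one_lt N hm
  have hwk : w ((L ^ k) x₀) ≤ w x₀ := by
    rw [hw.scaling_pow]
    exact mul_le_of_le_one_left (hw.nonneg x₀)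
      (pow_le_one₀ (Real.rpow_nonneg (abs_nonneg _) _) hscale)
  linarith [hN _ hwk, hgrowth k]

theorem exists_add_le_one_add_mul (hw : IsPseudoNorm A w) (hn : 0 < n)
    (hA : ∀ x ≠ 0, ‖x‖ < ‖mapp A x‖) {ε : ℝ} (hε : 0 < ε) (c : ℝ) :
    ∃ R, ∀ u v, w v ≤ c → R ≤ w u → w (u + v) ≤ (1 + ε) * w u := by
  set L := Matrix.toEuclideanLin A
  set lam := |A.det| ^ ((1 : ℝ) / n)
  have hlam : 1 < lam := hw.one_lt_abs_det_rpow hn hA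
  have hL : Function.Surjective L := by
    refine LinearMap.injective_iff_surjective.mp
      ((injective_iff_map_eq_zero L).mpr fun x hx => ?_)
    by_contra h0
    have h := hA x h0
    rw [mapp, hx, norm_zero] at h
    exact (norm_nonneg x).not_gt h
  obtain ⟨N, hN⟩ := hw.exists_norm_le_of_le lam
  obtain ⟨δ, hδ, hunif⟩ := Metric.mem_uniformity_dist.mp
    ((isCompact_closedBall (0 : Pt n) N).uniformContinuousAt_of_continuousAt w
      (fun a _ => hw.continuous.continuousAt) (Metric.dist_mem_uniformity hε))
  obtain ⟨τ, hτ, hτδ⟩ := hw.exists_pos_norm_lt_of_le hδ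
  refine ⟨max 1 (lam * c / τ), fun u v hv hu => ?_⟩
  obtain ⟨k, hk, hk'⟩ := exists_nat_pow_near ((le_max_left _ _).trans hu) hlam
  obtain ⟨u₀, rfl⟩ := Module.End.coe_pow L k ▸ hL.iterate k u
  obtain ⟨v₀, rfl⟩ := Module.End.coe_pow L k ▸ hL.iterate k v
  rw [← map_add, hw.scaling_pow, hw.scaling_pow]
  rw [hw.scaling_pow] at hv hu hk hk'
  have hlamk : 0 < lam ^ k := pow_pos (zero_lt_one.trans hlam) k
  have hu₀ : 1 ≤ w u₀ := by nlinarith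
  have hu₀' : w u₀ ≤ lam := by rw [pow_succ] at hk'; nlinarith
  have hv₀ : ‖v₀‖ < δ := by
    have hlarge : lam * (c / τ) < lam * lam ^ k := by
      rw [← mul_div_assoc, ← pow_succ']
      exact ((le_max_right _ _).trans hu).trans_lt hk'
    have hc : c < lam ^ k * τ :=
      (div_lt_iff₀ hτ).mp (lt_of_mul_lt_mul_left hlarge (zero_lt_one.trans hlam).le)
    exact hτδ v₀ (lt_of_mul_lt_mul_left (hv.trans_lt hc) hlamk.le).le
  have hclose : dist (w u₀) (w (u₀ + v₀)) < ε :=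
    hunif (by simpa [dist_eq_norm] using hv₀) (by simpa using hN u₀ hu₀')
  rw [Real.dist_eq, abs_lt] at hclose
  have : w (u₀ + v₀) ≤ (1 + ε) * w u₀ := by nlinarith
  calc lam ^ k * w (u₀ + v₀) ≤ lam ^ k * ((1 + ε) * w u₀) := by gcongr
    _ = (1 + ε) * (lam ^ k * w u₀) := by ring

theorem exists_pdiam_add_le (hw : IsPseudoNorm A w) (hn : 0 < n)
    (hA : ∀ x ≠ 0, ‖x‖ < ‖mapp A x‖) {K : Set (Pt n)} (hK : IsCompact K) {ε : ℝ} (hε : 0 < ε) :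
    ∃ r₁, ∀ U, ENNReal.ofReal r₁ ≤ pdiam w U →
      pdiam w (U + K) ≤ ENNReal.ofReal (1 + ε) * pdiam w U := by
  set c := (pdiam w K).toReal
  have hcK : ∀ p ∈ K, ∀ q ∈ K, w (p - q) ≤ c := fun p hp q hq =>
    (ENNReal.ofReal_le_iff_le_toReal (pdiam_lt_top hw.continuous hK).ne).mp
      (ofReal_le_pdiam w hp hq)
  obtain ⟨R, hR⟩ := hw.exists_add_le_one_add_mul hn hA hε c
  obtain ⟨β, hβ, htri⟩ := hw.quasi_triangle
  refine ⟨β * max R c, fun U hU => pdiam_le w ?_⟩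
  rintro _ ⟨a, ha, p, hp, rfl⟩ _ ⟨b, hb, q, hq, rfl⟩
  rw [add_sub_add_comm]
  rcases le_or_gt R (w (a - b)) with hab | hab
  · calc ENNReal.ofReal (w (a - b + (p - q)))
        ≤ ENNReal.ofReal ((1 + ε) * w (a - b)) :=
          ENNReal.ofReal_le_ofReal (hR _ _ (hcK p hp q hq) hab)
      _ = ENNReal.ofReal (1 + ε) * ENNReal.ofReal (w (a - b)) := ENNReal.ofReal_mul (by linarith)
      _ ≤ ENNReal.ofReal (1 + ε) * pdiam w U := by gcongr; exact ofReal_le_pdiam w ha hb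
  · calc ENNReal.ofReal (w (a - b + (p - q)))
        ≤ ENNReal.ofReal (β * max R c) := by
          refine ENNReal.ofReal_le_ofReal ((htri _ _).trans ?_)
          gcongr
          exact hcK p hp q hq
      _ ≤ pdiam w U := hU
      _ ≤ ENNReal.ofReal (1 + ε) * pdiam w U :=
          le_mul_of_one_le_left' (ENNReal.one_le_ofReal.mpr (by linarith))

end IsPseudoNorm

section UpperDensity

variable {n : ℕ} (w : Pt n → ℝ) (s : ℝ)

def upperDensityFrom (r : ℝ) (ν : Measure (Pt n)) : ℝ≥0∞ :=
  ⨆ (U : Set (Pt n)) (_ : IsCompact U) (_ : Convex ℝ U)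
    (_ : ENNReal.ofReal r ≤ pdiam w U), ν U / pdiam w U ^ s

theorem upperDensity_eq_iInf (ν : Measure (Pt n)) :
    upperDensity w s ν = ⨅ (r : ℝ) (_ : 0 < r), upperDensityFrom w s r ν :=
  rfl

theorem upperDensityFrom_anti {r r' : ℝ} (h : r ≤ r') (ν : Measure (Pt n)) :
    upperDensityFrom w s r' ν ≤ upperDensityFrom w s r ν :=
  iSup₂_mono' fun U hU => ⟨U, hU, iSup₂_mono' fun hUc hd =>
    ⟨hUc, (ENNReal.ofReal_le_ofReal h).trans hd, le_rfl⟩⟩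

theorem div_le_upperDensityFrom {r : ℝ} (ν : Measure (Pt n)) {U : Set (Pt n)} (hU : IsCompact U)
    (hUc : Convex ℝ U) (hd : ENNReal.ofReal r ≤ pdiam w U) :
    ν U / pdiam w U ^ s ≤ upperDensityFrom w s r ν :=
  le_iSup₂_of_le U hU (le_iSup₂_of_le hUc hd le_rfl)

variable {w} in
theorem measure_le_upperDensityFrom_mul (hw : Continuous w) {r : ℝ} (hr : 0 < r)
    (ν : Measure (Pt n)) {U : Set (Pt n)} (hU : IsCompact U) (hUc : Convex ℝ U)
    (hd : ENNReal.ofReal r ≤ pdiam w U) :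
    ν U ≤ upperDensityFrom w s r ν * pdiam w U ^ s := by
  have h0 : pdiam w U ≠ 0 := ((ENNReal.ofReal_pos.mpr hr).trans_le hd).ne'
  have htop : pdiam w U ≠ ⊤ := (pdiam_lt_top hw hU).ne
  exact (ENNReal.div_le_iff (ENNReal.rpow_pos (pos_iff_ne_zero.mpr h0) htop).ne'
    (ENNReal.rpow_ne_top_of_ne_zero h0 htop)).mp (div_le_upperDensityFrom w s ν hU hUc hd)

theorem ofReal_div_rpow_mul_upperDensity_le {μ ν : Measure (Pt n)} {K : Set (Pt n)}
    (hK : IsCompact K) (hKc : Convex ℝ K) (hK0 : 0 ∈ K) (hs : 0 ≤ s) {p q r₁ : ℝ} (hq : 0 < q)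
    (hmass : ∀ U, IsCompact U → ENNReal.ofReal p * μ U ≤ ν (U + K))
    (hfat : ∀ U, ENNReal.ofReal r₁ ≤ pdiam w U →
      pdiam w (U + K) ≤ ENNReal.ofReal q * pdiam w U) :
    ENNReal.ofReal (p / q ^ s) * upperDensity w s μ ≤ upperDensity w s ν := by
  rw [ENNReal.ofReal_div_of_pos (Real.rpow_pos_of_pos hq s), ← ENNReal.ofReal_rpow_of_pos hq]
  have hqs0 : ENNReal.ofReal q ^ s ≠ 0 :=
    (ENNReal.rpow_pos (ENNReal.ofReal_pos.mpr hq) ENNReal.ofReal_ne_top).ne'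
  have hqstop : ENNReal.ofReal q ^ s ≠ ⊤ :=
    ENNReal.rpow_ne_top_of_ne_zero (ENNReal.ofReal_pos.mpr hq).ne' ENNReal.ofReal_ne_top
  refine le_iInf₂ fun r hr => ?_
  set r' := max r r₁
  have hr' : 0 < r' := hr.trans_le (le_max_left _ _)
  have hstep : ∀ U, IsCompact U → Convex ℝ U → ENNReal.ofReal r' ≤ pdiam w U →
      ENNReal.ofReal p / ENNReal.ofReal q ^ s * (μ U / pdiam w U ^ s) ≤
        upperDensityFrom w s r' ν := by
    intro U hU hUc hd
    have hdK : ENNReal.ofReal r' ≤ pdiam w (U + K) :=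
      hd.trans (pdiam_mono w (subset_add_left U hK0))
    refine le_trans ?_ (div_le_upperDensityFrom w s ν (hU.add hK) (hUc.add hKc) hdK)
    rw [← ENNReal.mul_div_mul_comm (Or.inl hqs0) (Or.inl hqstop),
      ← ENNReal.mul_rpow_of_nonneg _ _ hs]
    refine ENNReal.div_le_div (hmass U hU) (ENNReal.rpow_le_rpow (hfat U ?_) hs)
    exact (ENNReal.ofReal_le_ofReal (le_max_right _ _)).trans hd
  calc ENNReal.ofReal p / ENNReal.ofReal q ^ s * upperDensity w s μ
      ≤ ENNReal.ofReal p / ENNReal.ofReal q ^ s * upperDensityFrom w s r' μ := by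
        gcongr
        exact iInf₂_le r' hr'
    _ ≤ upperDensityFrom w s r' ν := by
        simp only [upperDensityFrom, ENNReal.mul_iSup]
        exact iSup₂_le fun U hU => iSup₂_le fun hUc hd => hstep U hU hUc hd
    _ ≤ upperDensityFrom w s r ν := upperDensityFrom_anti w s (le_max_left _ _) ν

end UpperDensity

namespace IsPseudoNorm

variable {n : ℕ} {A : Matrix (Fin n) (Fin n) ℝ} {w : Pt n → ℝ} {s : ℝ}

theorem isFiniteMeasureOnCompacts_of_upperDensity_ne_top (hw : IsPseudoNorm A w) (hn : 0 < n)
    {ν : Measure (Pt n)} (hν : upperDensity w s ν ≠ ⊤) : IsFiniteMeasureOnCompacts ν := by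
  obtain ⟨r, hr, hfin⟩ : ∃ r, 0 < r ∧ upperDensityFrom w s r ν < ⊤ := by
    simpa [upperDensity_eq_iInf, iInf_lt_iff] using hν.lt_top
  obtain ⟨R, hR⟩ := hw.exists_le_pdiam_closedBall hn r
  refine ⟨fun K hK => ?_⟩
  obtain ⟨R', hKR'⟩ := hK.isBounded.subset_closedBall 0
  set B := closedBall (0 : Pt n) (max R R')
  have hB : IsCompact B := isCompact_closedBall _ _
  have hdB : ENNReal.ofReal r ≤ pdiam w B :=
    hR.trans (pdiam_mono w (closedBall_subset_closedBall (le_max_left _ _)))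
  calc ν K ≤ ν B := measure_mono (hKR'.trans (closedBall_subset_closedBall (le_max_right _ _)))
    _ ≤ upperDensityFrom w s r ν * pdiam w B ^ s :=
        measure_le_upperDensityFrom_mul s hw.continuous hr ν hB (convex_closedBall _ _) hdB
    _ < ⊤ := ENNReal.mul_lt_top hfin (ENNReal.rpow_ne_top_of_ne_zero
        ((ENNReal.ofReal_pos.mpr hr).trans_le hdB).ne' (pdiam_lt_top hw.continuous hB).ne).lt_top

theorem upperDensity_conv_le (hw : IsPseudoNorm A w) (hn : 0 < n) (μ σ : Measure (Pt n))
    [IsProbabilityMeasure σ] : upperDensity w s (μ ∗ σ) ≤ upperDensity w s μ := by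
  rcases eq_or_ne (upperDensity w s μ) ⊤ with htop | htop
  · simp [htop]
  have := hw.isFiniteMeasureOnCompacts_of_upperDensity_ne_top hn htop
  refine iInf₂_mono fun r hr => iSup₂_le fun U hU => iSup₂_le fun hUc hd => ?_
  refine ENNReal.div_le_of_le_mul
    (Measure.conv_apply_le_of_forall_preimage_add_le hU.isClosed.measurableSet fun y => ?_)
  rw [← pdiam_preimage_add_right w U y] at hd ⊢
  exact measure_le_upperDensityFrom_mul s hw.continuous hr μ
    ((Homeomorph.addRight y).isCompact_preimage.mpr hU) (hUc.translate_preimage_left y) hd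

theorem upperDensity_le_conv (hw : IsPseudoNorm A w) (hn : 0 < n)
    (hA : ∀ x ≠ 0, ‖x‖ < ‖mapp A x‖) (hs : 0 ≤ s) (μ σ : Measure (Pt n))
    [IsProbabilityMeasure σ] : upperDensity w s μ ≤ upperDensity w s (μ ∗ σ) := by
  refine ENNReal.le_of_forall_lt_one_mul_le fun a ha => ?_
  obtain ⟨ε, hε, hε1, haε⟩ := exists_le_ofReal_one_sub_div_one_add_rpow ha s
  obtain ⟨ρ, hρ⟩ := exists_lt_measure_closedBall σ 0 (a := ENNReal.ofReal (1 - ε))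
    (by simpa using hε)
  have hρ0 : 0 ≤ ρ := nonempty_closedBall.mp (nonempty_of_measure_ne_zero (pos_of_gt hρ).ne')
  obtain ⟨r₁, hr₁⟩ := hw.exists_pdiam_add_le hn hA (isCompact_closedBall 0 ρ) hε
  refine (mul_le_mul_left haε _).trans (ofReal_div_rpow_mul_upperDensity_le w s
    (isCompact_closedBall _ _) (convex_closedBall _ _) (mem_closedBall_self hρ0) hs
    (by linarith) (fun U hU => ?_) hr₁)
  exact (mul_le_mul_left hρ.le _).trans
    (Measure.mul_le_conv_apply_add (hU.add (isCompact_closedBall _ _)).isClosed.measurableSet)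

end IsPseudoNorm

theorem stmt14_general {n : ℕ} (hn : 0 < n) (A : Matrix (Fin n) (Fin n) ℝ)
    (hAnorm : ∀ x : Pt n, ‖x‖ ≤ ‖mapp A x‖)
    (hAeq : ∀ x : Pt n, ‖x‖ = ‖mapp A x‖ → x = 0)
    (w : Pt n → ℝ) (hw : IsPseudoNorm A w)
    (s : ℝ) (hs : 0 ≤ s) (μ σ : Measure (Pt n)) (hσ : IsProbabilityMeasure σ) :
    upperDensity w s (mconv μ σ) = upperDensity w s μ := by
  have hA : ∀ x ≠ 0, ‖x‖ < ‖mapp A x‖ := fun x hx =>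
    (hAnorm x).lt_of_ne fun h => hx (hAeq x h)
  exact le_antisymm (hw.upperDensity_conv_le hn μ σ) (hw.upperDensity_le_conv hn hA hs μ σ)

/-- Lemma 5.1: convolving with a probability measure does not change the upper
`s`-density w.r.t. `w`. -/
theorem stmt14 {n : ℕ} (hn : 0 < n) (A : Matrix (Fin n) (Fin n) ℝ)
    (hA : IsExpandingMatrix A)
    (hAnorm : ∀ x : Pt n, ‖x‖ ≤ ‖mapp A x‖)
    (hAeq : ∀ x : Pt n, ‖x‖ = ‖mapp A x‖ → x = 0)
    (w : Pt n → ℝ) (hw : IsPseudoNorm A w)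
    (s : ℝ) (hs : 0 ≤ s) (μ σ : Measure (Pt n)) (hσ : IsProbabilityMeasure σ) :
    upperDensity w s (mconv μ σ) = upperDensity w s μ :=
  stmt14_general hn A hAnorm hAeq w hw s hs μ σ hσ
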